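/- Let T be a tree contained in a finite collection 𝐏 of quartiles, and for each P ∈ T and j = 1,2,3 let a^{(j)}_{P_j} be a complex number. Then |Σ_{P∈T} |I_P|^{−1/2} a^{(1)}_{P_1} a^{(2)}_{P_2} a^{(3)}_{P_3}| ≤ |I_T| · Π_{j=1}^3 size_j((a^{(j)}_{P_j})_{P∈T}), where I_T is the time interval of the top of T. -/

import Mathlib

open MeasureTheory Set

/-- The Walsh functions `w_l : ℝ → ℝ`, defined recursively by
`w_0 = χ_{[0,1)}`, `w_{2l}(x) = w_l(2x) + w_l(2x−1)`,
`w_{2l+1}(x) = w_l(2x) − w_l(2x−1)`. -/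
noncomputable def walsh : ℕ → ℝ → ℝ
  | 0, x => if x ∈ Set.Ico (0:ℝ) 1 then 1 else 0
  | (n+1), x =>
      if (n+1) % 2 = 0 then walsh ((n+1)/2) (2*x) + walsh ((n+1)/2) (2*x - 1)
      else walsh ((n+1)/2) (2*x) - walsh ((n+1)/2) (2*x - 1)
  decreasing_by all_goals exact Nat.div_lt_self (Nat.succ_pos n) one_lt_two

/-- A tile `[2^{-k}n, 2^{-k}(n+1)) × [2^k l, 2^k(l+1))`:
a half-open dyadic rectangle of area one. -/
structure Tile where
  k : ℤ
  n : ℤ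
  l : ℤ
deriving DecidableEq

namespace Tile

/-- The time interval `I_P = [2^{-k}n, 2^{-k}(n+1))` of a tile. -/
noncomputable def I (p : Tile) : Set ℝ := Set.Ico ((2:ℝ)^(-p.k) * p.n) ((2:ℝ)^(-p.k) * (p.n+1))

/-- The frequency interval `ω_P = [2^k l, 2^k(l+1))` of a tile. -/
noncomputable def freq (p : Tile) : Set ℝ := Set.Ico ((2:ℝ)^(p.k) * p.l) ((2:ℝ)^(p.k) * (p.l+1))

/-- The tile as a subset `I_P × ω_P` of the time-frequency plane. -/
noncomputable def area (p : Tile) : Set (ℝ × ℝ) := p.I ×ˢ p.freq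

/-- The length `|I_P| = 2^{-k}` of the time interval of a tile. -/
noncomputable def len (p : Tile) : ℝ := (2:ℝ)^(-p.k)

/-- The center `ξ_P` of the frequency interval of a tile. -/
noncomputable def ξ (p : Tile) : ℝ := (2:ℝ)^(p.k) * ((p.l : ℝ) + 1/2)

/-- The tile order: `p < q` iff `I_p ⊊ I_q` and `ω_q ⊆ ω_p`. -/
def lt (p q : Tile) : Prop := p.I ⊂ q.I ∧ q.freq ⊆ p.freq

/-- `p ≤ q` iff `p < q` or `p = q`. -/
def le (p q : Tile) : Prop := Tile.lt p q ∨ p = q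

/-- The Walsh wave packet `φ_P(x) = 2^{k/2} w_l(2^k x − n)` of a tile. -/
noncomputable def wp (p : Tile) : ℝ → ℝ :=
  fun x => Real.sqrt ((2:ℝ)^(p.k)) * walsh p.l.toNat ((2:ℝ)^(p.k) * x - p.n)

end Tile

/-- A quartile `[2^{-k}n, 2^{-k}(n+1)) × [2^{k+2}l, 2^{k+2}(l+1))`:
a dyadic rectangle of area four. -/
structure Quartile where
  k : ℤ
  n : ℤ
  l : ℤ
deriving DecidableEq

namespace Quartile

/-- The time interval `I_P` of a quartile. -/
noncomputable def I (P : Quartile) : Set ℝ := Set.Ico ((2:ℝ)^(-P.k) * P.n) ((2:ℝ)^(-P.k) * (P.n+1))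

/-- The length `|I_P| = 2^{-k}` of the time interval of a quartile. -/
noncomputable def len (P : Quartile) : ℝ := (2:ℝ)^(-P.k)

/-- The `j`-th sub-tile `P_j = I_P × [2^k(4l+j−1), 2^k(4l+j))` of a quartile,
for `j = 1, 2, 3`. -/
def tile (P : Quartile) (j : ℕ) : Tile := ⟨P.k, P.n, 4*P.l + ((j - 1 : ℕ) : ℤ)⟩

end Quartile

/-- `T` is an `i`-tree with top `top`: `P_i ≤ top_i` for all `P ∈ T`. -/
def IsTree (i : ℕ) (top : Quartile) (T : Finset Quartile) : Prop :=
  ∀ P ∈ T, Tile.le (P.tile i) (top.tile i)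

/-- `size_j((a_P)_{P∈Ps})`: the sup over trees `T ⊆ Ps` which are `i`-trees for
some `i ≠ j` of `(|I_T|⁻¹ Σ_{P∈T} |a_{P_j}|²)^{1/2}`. -/
noncomputable def size (Ps : Finset Quartile) (j : ℕ) (a : Quartile → ℂ) : ℝ :=
  sSup ((fun p : Quartile × Finset Quartile =>
      Real.sqrt ((∑ P ∈ p.2, ‖a P‖^2) / p.1.len)) ''
    {p | p.2 ⊆ Ps ∧ ∃ i ∈ ({1,2,3} : Set ℕ), i ≠ j ∧ IsTree i p.1 p.2})

/-- `energy_j((a_P)_{P∈Ps})`: the sup over subsets `D ⊆ Ps` with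
`{P_j : P ∈ D}` pairwise disjoint of `(Σ_{P∈D} |a_{P_j}|²)^{1/2}`. -/
noncomputable def energy (Ps : Finset Quartile) (j : ℕ) (a : Quartile → ℂ) : ℝ :=
  sSup ((fun D : Finset Quartile => Real.sqrt (∑ P ∈ D, ‖a P‖^2)) ''
    {D | D ⊆ Ps ∧ ∀ P ∈ D, ∀ P' ∈ D, P ≠ P' →
      Disjoint (P.tile j).area (P'.tile j).area})

/-- The `L^{1,∞}(I)` quasinorm `sup_{λ>0} λ |{x ∈ I : |g(x)| > λ}|`. -/
noncomputable def weakL1 (g : ℝ → ℝ) (I : Set ℝ) : ℝ :=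
  sSup {r | ∃ lam : ℝ, 0 < lam ∧ r = lam * (volume {x ∈ I | lam < |g x|}).toReal}

/-- The square function `(Σ_{P∈T} |a_{P_j}|² χ_{I_P}/|I_P|)^{1/2}` of a tree. -/
noncomputable def treeFn (T : Finset Quartile) (a : Quartile → ℂ) : ℝ → ℝ :=
  fun x => Real.sqrt (∑ P ∈ T, ‖a P‖^2 * (P.I.indicator (fun _ => (1:ℝ)) x) / P.len)

section Aux

lemma Quartile.len_pos (P : Quartile) : 0 < P.len := by
  unfold Quartile.len; positivity

lemma len_le_of_tile_le (P Q : Quartile) (i : ℕ)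
    (h : Tile.le (P.tile i) (Q.tile i)) : P.len ≤ Q.len := by
  rcases h with h | h
  · have hsub := h.1.subset
    unfold Tile.I Quartile.tile at hsub
    simp only at hsub
    have hlt : (2:ℝ)^(-P.k) * P.n < (2:ℝ)^(-P.k) * (P.n + 1) := by
      have : (0:ℝ) < (2:ℝ)^(-P.k) := by positivity
      nlinarith
    rw [Set.Ico_subset_Ico_iff hlt] at hsub
    unfold Quartile.len
    nlinarith [hsub.1, hsub.2]
  · have : P.k = Q.k := congrArg Tile.k h
    unfold Quartile.len; rw [this]

lemma size_bddAbove (Ps : Finset Quartile) (k : ℕ) (a : Quartile → ℂ) :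
    BddAbove ((fun p : Quartile × Finset Quartile =>
      Real.sqrt ((∑ P ∈ p.2, ‖a P‖^2) / p.1.len)) ''
    {p | p.2 ⊆ Ps ∧ ∃ i ∈ ({1,2,3} : Set ℕ), i ≠ k ∧ IsTree i p.1 p.2}) := by
  refine ⟨Real.sqrt (∑ P ∈ Ps, ‖a P‖^2 / P.len), ?_⟩
  rintro x ⟨⟨top, D⟩, ⟨hDP, i, _, _, htree⟩, rfl⟩
  simp only
  apply Real.sqrt_le_sqrt
  calc (∑ P ∈ D, ‖a P‖^2) / top.len = ∑ P ∈ D, ‖a P‖^2 / top.len := by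
        rw [Finset.sum_div]
    _ ≤ ∑ P ∈ D, ‖a P‖^2 / P.len := by
        apply Finset.sum_le_sum
        intro P hP
        exact div_le_div_of_nonneg_left (sq_nonneg _) P.len_pos
          (len_le_of_tile_le P top i (htree P hP))
    _ ≤ ∑ P ∈ Ps, ‖a P‖^2 / P.len := by
        apply Finset.sum_le_sum_of_subset_of_nonneg hDP
        intro P _ _
        exact div_nonneg (sq_nonneg _) P.len_pos.le

lemma le_size (Ps : Finset Quartile) (k : ℕ) (a : Quartile → ℂ)
    (top : Quartile) (D : Finset Quartile) (hDP : D ⊆ Ps)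
    (i : ℕ) (hi : i ∈ ({1,2,3} : Set ℕ)) (hik : i ≠ k) (htree : IsTree i top D) :
    Real.sqrt ((∑ P ∈ D, ‖a P‖^2) / top.len) ≤ size Ps k a :=
  le_csSup (size_bddAbove Ps k a) ⟨(top, D), ⟨hDP, i, hi, hik, htree⟩, rfl⟩

lemma size_nonneg (Ps : Finset Quartile) (k : ℕ) (a : Quartile → ℂ) :
    0 ≤ size Ps k a := by
  apply Real.sSup_nonneg
  rintro x ⟨p, _, rfl⟩
  exact Real.sqrt_nonneg _

lemma pointwise_size (Ps : Finset Quartile) (k : ℕ) (a : Quartile → ℂ)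
    (P : Quartile) (hP : P ∈ Ps) :
    ‖a P‖ ≤ Real.sqrt P.len * size Ps k a := by
  obtain ⟨i, hi, hik⟩ : ∃ i ∈ ({1,2,3} : Set ℕ), i ≠ k := by
    by_cases h : k = 1
    · exact ⟨2, by simp, by omega⟩
    · exact ⟨1, by simp, by omega⟩
  have htree : IsTree i P {P} := by
    intro Q hQ
    simp only [Finset.mem_singleton] at hQ
    subst hQ
    exact Or.inr rfl
  have h := le_size Ps k a P {P} (by simpa using hP) i hi hik htree
  rw [Finset.sum_singleton, Real.sqrt_div (sq_nonneg _), Real.sqrt_sq (norm_nonneg _),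
    div_le_iff₀ (Real.sqrt_pos.mpr P.len_pos)] at h
  linarith [h]

lemma sq_sum_le (T : Finset Quartile) (k j : ℕ) (a : Quartile → ℂ)
    (hj : j ∈ ({1,2,3} : Set ℕ)) (hjk : j ≠ k)
    (top : Quartile) (hT : IsTree j top T) :
    ∑ P ∈ T, ‖a P‖^2 ≤ top.len * (size T k a)^2 := by
  have h := le_size T k a top T (le_refl _) j hj hjk hT
  have h2 : (∑ P ∈ T, ‖a P‖^2) / top.len ≤ (size T k a)^2 := by
    have := Real.sq_sqrt (div_nonneg (Finset.sum_nonneg fun P _ => sq_nonneg _)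
      top.len_pos.le : 0 ≤ (∑ P ∈ T, ‖a P‖^2) / top.len)
    nlinarith [size_nonneg T k a, Real.sqrt_nonneg ((∑ P ∈ T, ‖a P‖^2) / top.len)]
  rw [div_le_iff₀ top.len_pos] at h2
  linarith [h2]

lemma calc_aux (T : Finset Quartile) (f g h : Quartile → ℝ)
    (hf : ∀ P ∈ T, 0 ≤ f P) (hg : ∀ P ∈ T, 0 ≤ g P) (hh : ∀ P ∈ T, 0 ≤ h P)
    (L S1 S2 S3 : ℝ) (hL : 0 ≤ L) (hS1 : 0 ≤ S1) (hS2 : 0 ≤ S2) (hS3 : 0 ≤ S3)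
    (h1 : ∀ P ∈ T, f P ≤ Real.sqrt P.len * S1)
    (h2 : ∑ P ∈ T, (g P)^2 ≤ L * S2^2) (h3 : ∑ P ∈ T, (h P)^2 ≤ L * S3^2) :
    ∑ P ∈ T, (1 / Real.sqrt P.len) * (f P * g P * h P) ≤ L * (S1 * S2 * S3) := by
  have step1 : ∑ P ∈ T, (1 / Real.sqrt P.len) * (f P * g P * h P)
      ≤ ∑ P ∈ T, S1 * (g P * h P) := by
    apply Finset.sum_le_sum
    intro P hP
    have hsq : 0 < Real.sqrt P.len := Real.sqrt_pos.mpr P.len_pos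
    have : f P * (g P * h P) ≤ (Real.sqrt P.len * S1) * (g P * h P) :=
      mul_le_mul_of_nonneg_right (h1 P hP) (mul_nonneg (hg P hP) (hh P hP))
    calc (1 / Real.sqrt P.len) * (f P * g P * h P)
        = (1 / Real.sqrt P.len) * (f P * (g P * h P)) := by ring
      _ ≤ (1 / Real.sqrt P.len) * ((Real.sqrt P.len * S1) * (g P * h P)) :=
          mul_le_mul_of_nonneg_left this (by positivity)
      _ = S1 * (g P * h P) := by field_simp
  have cs : (∑ P ∈ T, g P * h P)^2 ≤ (∑ P ∈ T, (g P)^2) * ∑ P ∈ T, (h P)^2 :=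
    Finset.sum_mul_sq_le_sq_mul_sq T g h
  have hgh : 0 ≤ ∑ P ∈ T, g P * h P :=
    Finset.sum_nonneg fun P hP => mul_nonneg (hg P hP) (hh P hP)
  have hg2 : 0 ≤ ∑ P ∈ T, (g P)^2 := Finset.sum_nonneg fun P _ => sq_nonneg _
  have hh2 : 0 ≤ ∑ P ∈ T, (h P)^2 := Finset.sum_nonneg fun P _ => sq_nonneg _
  have step2 : ∑ P ∈ T, g P * h P ≤ L * (S2 * S3) := by
    have hsq : (∑ P ∈ T, g P * h P)^2 ≤ (L * (S2 * S3))^2 := by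
      nlinarith [mul_le_mul h2 h3 hh2 (by positivity : (0:ℝ) ≤ L * S2^2)]
    calc ∑ P ∈ T, g P * h P = Real.sqrt ((∑ P ∈ T, g P * h P)^2) :=
          (Real.sqrt_sq hgh).symm
      _ ≤ Real.sqrt ((L * (S2 * S3))^2) := Real.sqrt_le_sqrt hsq
      _ = L * (S2 * S3) := Real.sqrt_sq (by positivity)
  calc ∑ P ∈ T, (1 / Real.sqrt P.len) * (f P * g P * h P)
      ≤ ∑ P ∈ T, S1 * (g P * h P) := step1
    _ = S1 * ∑ P ∈ T, g P * h P := by rw [Finset.mul_sum]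
    _ ≤ S1 * (L * (S2 * S3)) := mul_le_mul_of_nonneg_left step2 hS1
    _ = L * (S1 * S2 * S3) := by ring

end Aux

/-- the single tree estimate
`|Σ_{P∈T} |I_P|^{-1/2} a¹_{P_1} a²_{P_2} a³_{P_3}| ≤ |I_T| ∏_j size_j`. -/
theorem tree_estimate (Ps : Finset Quartile) (T : Finset Quartile) (hTP : T ⊆ Ps)
    (j : ℕ) (hj : j ∈ ({1,2,3} : Set ℕ)) (top : Quartile) (hT : IsTree j top T)
    (a₁ a₂ a₃ : Quartile → ℂ) :
    ‖∑ P ∈ T, ((1 / Real.sqrt P.len : ℝ) : ℂ) * (a₁ P * a₂ P * a₃ P)‖ ≤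
      top.len * (size T 1 a₁ * size T 2 a₂ * size T 3 a₃) := by
  have hS1 := size_nonneg T 1 a₁
  have hS2 := size_nonneg T 2 a₂
  have hS3 := size_nonneg T 3 a₃
  have hL := top.len_pos.le
  have key : ‖∑ P ∈ T, ((1 / Real.sqrt P.len : ℝ) : ℂ) * (a₁ P * a₂ P * a₃ P)‖
      ≤ ∑ P ∈ T, (1 / Real.sqrt P.len) * (‖a₁ P‖ * ‖a₂ P‖ * ‖a₃ P‖) := by
    refine (norm_sum_le _ _).trans (le_of_eq (Finset.sum_congr rfl fun P _ => ?_))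
    rw [norm_mul, norm_mul, norm_mul, Complex.norm_real, Real.norm_eq_abs,
      abs_of_nonneg (by positivity)]
  refine key.trans ?_
  simp only [Set.mem_insert_iff, Set.mem_singleton_iff] at hj
  rcases hj with rfl | rfl | rfl
  · exact calc_aux T (fun P => ‖a₁ P‖) (fun P => ‖a₂ P‖) (fun P => ‖a₃ P‖)
      (fun P _ => norm_nonneg _) (fun P _ => norm_nonneg _) (fun P _ => norm_nonneg _)
      top.len _ _ _ hL hS1 hS2 hS3
      (fun P hP => pointwise_size T 1 a₁ P hP)
      (sq_sum_le T 2 1 a₂ (by simp) (by omega) top hT)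
      (sq_sum_le T 3 1 a₃ (by simp) (by omega) top hT)
  · have h := calc_aux T (fun P => ‖a₂ P‖) (fun P => ‖a₁ P‖) (fun P => ‖a₃ P‖)
      (fun P _ => norm_nonneg _) (fun P _ => norm_nonneg _) (fun P _ => norm_nonneg _)
      top.len (size T 2 a₂) (size T 1 a₁) (size T 3 a₃) hL hS2 hS1 hS3
      (fun P hP => pointwise_size T 2 a₂ P hP)
      (sq_sum_le T 1 2 a₁ (by simp) (by omega) top hT)
      (sq_sum_le T 3 2 a₃ (by simp) (by omega) top hT)
    calc ∑ P ∈ T, (1 / Real.sqrt P.len) * (‖a₁ P‖ * ‖a₂ P‖ * ‖a₃ P‖)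
        = ∑ P ∈ T, (1 / Real.sqrt P.len) * (‖a₂ P‖ * ‖a₁ P‖ * ‖a₃ P‖) :=
          Finset.sum_congr rfl (fun P _ => by ring)
      _ ≤ top.len * (size T 2 a₂ * size T 1 a₁ * size T 3 a₃) := h
      _ = top.len * (size T 1 a₁ * size T 2 a₂ * size T 3 a₃) := by ring
  · have h := calc_aux T (fun P => ‖a₃ P‖) (fun P => ‖a₁ P‖) (fun P => ‖a₂ P‖)
      (fun P _ => norm_nonneg _) (fun P _ => norm_nonneg _) (fun P _ => norm_nonneg _)
      top.len (size T 3 a₃) (size T 1 a₁) (size T 2 a₂) hL hS3 hS1 hS2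
      (fun P hP => pointwise_size T 3 a₃ P hP)
      (sq_sum_le T 1 3 a₁ (by simp) (by omega) top hT)
      (sq_sum_le T 2 3 a₂ (by simp) (by omega) top hT)
    calc ∑ P ∈ T, (1 / Real.sqrt P.len) * (‖a₁ P‖ * ‖a₂ P‖ * ‖a₃ P‖)
        = ∑ P ∈ T, (1 / Real.sqrt P.len) * (‖a₃ P‖ * ‖a₁ P‖ * ‖a₂ P‖) :=
          Finset.sum_congr rfl (fun P _ => by ring)
      _ ≤ top.len * (size T 3 a₃ * size T 1 a₁ * size T 2 a₂) := h
      _ = top.len * (size T 1 a₁ * size T 2 a₂ * size T 3 a₃) := by ring
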